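/- For every real p there exists a constant C = C(p) > 0 such that for every real t ≥ 1, every nonzero integer k, all integers l, l', and every real ξ: [ |l|³ / (k² + (l')² + (ξ − k·t)²) ] · ⟨t/⟨ξ, l'⟩⟩^p ≤ C · |l| · ( ⟨l − l'⟩² + (|l|² / ⟨l', t⟩²) · ⟨t/⟨ξ, l'⟩⟩^p ). -/
import Mathlib


/-- The Japanese bracket `⟨x⟩ = (1 + x²)^{1/2}`. -/
noncomputable def jb (x : ℝ) : ℝ := Real.sqrt (1 + x ^ 2)

/-- The two-variable Japanese bracket `⟨a,b⟩ = (1 + (|a| + |b|)²)^{1/2}`. -/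
noncomputable def jb2 (a b : ℝ) : ℝ := Real.sqrt (1 + (|a| + |b|) ^ 2)

lemma one_le_jb (x : ℝ) : 1 ≤ jb x := by
  rw [jb, Real.one_le_sqrt]; nlinarith [sq_nonneg x]

lemma jb_pos (x : ℝ) : 0 < jb x := lt_of_lt_of_le one_pos (one_le_jb x)

lemma jb_sq (x : ℝ) : jb x ^ 2 = 1 + x ^ 2 := Real.sq_sqrt (by positivity)

lemma one_le_jb2 (a b : ℝ) : 1 ≤ jb2 a b := by
  rw [jb2, Real.one_le_sqrt]; nlinarith [sq_nonneg (|a| + |b|)]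

lemma jb2_pos (a b : ℝ) : 0 < jb2 a b := lt_of_lt_of_le one_pos (one_le_jb2 a b)

lemma jb2_sq (a b : ℝ) : jb2 a b ^ 2 = 1 + (|a| + |b|) ^ 2 := Real.sq_sqrt (by positivity)

lemma abs_add_le_jb2 (a b : ℝ) : |a| + |b| ≤ jb2 a b := by
  have h : |a| + |b| = Real.sqrt ((|a| + |b|) ^ 2) := (Real.sqrt_sq (by positivity)).symm
  rw [h, jb2]
  exact Real.sqrt_le_sqrt (by nlinarith)

lemma jb_le_sqrt5 {x : ℝ} (h0 : 0 ≤ x) (h2 : x ≤ 2) : jb x ≤ Real.sqrt 5 := by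
  rw [jb]
  exact Real.sqrt_le_sqrt (by nlinarith)

lemma rpow_bound {x : ℝ} (p : ℝ) (h1 : 1 ≤ x) (h2 : x ≤ Real.sqrt 5) :
    x ^ p ≤ max 1 (Real.sqrt 5 ^ p) := by
  rcases le_or_gt 0 p with hp | hp
  · exact le_trans (Real.rpow_le_rpow (by linarith) h2 hp) (le_max_right _ _)
  · exact le_trans (Real.rpow_le_one_of_one_le_of_nonpos h1 hp.le) (le_max_left _ _)

set_option maxHeartbeats 1000000 in
/-- Purely real-variable core inequality. -/
lemma AdeZZZ_aux (M a b ξ t kk J T B G : ℝ)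
    (hM1 : 1 ≤ M) (ht : 1 ≤ t) (hk1 : 1 ≤ |kk|)
    (hJ1 : 1 ≤ J) (hJξ : |ξ| + |b| ≤ J)
    (hT1 : 1 ≤ T) (hTsq : T ^ 2 = 1 + (|b| + t) ^ 2)
    (hB0 : 0 ≤ B) (hBM : t / J ≤ 2 → B ≤ M)
    (hG : G = 1 + (a - b) ^ 2) :
    |a| ^ 3 / (kk ^ 2 + b ^ 2 + (ξ - kk * t) ^ 2) * B ≤
      (13 + 4 * M) * |a| * (G + |a| ^ 2 / T ^ 2 * B) := by
  set D := kk ^ 2 + b ^ 2 + (ξ - kk * t) ^ 2 with hDdef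
  have hk2 : (1:ℝ) ≤ kk ^ 2 := by nlinarith [sq_abs kk]
  have hD1 : (1:ℝ) ≤ D := by nlinarith [sq_nonneg b, sq_nonneg (ξ - kk * t)]
  have hDpos : (0:ℝ) < D := by linarith
  have hJpos : (0:ℝ) < J := by linarith
  have hTT : (0:ℝ) < T ^ 2 := by positivity
  have ha0 : (0:ℝ) ≤ |a| := abs_nonneg _
  have hG0 : (0:ℝ) ≤ G := by rw [hG]; positivity
  have hX0 : (0:ℝ) ≤ |a| ^ 2 / T ^ 2 * B := by positivity
  rcases le_or_gt (t / 2) J with hcase | hcase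
  · -- Case 1 : J ≥ t/2, weight is bounded, first RHS term dominates
    have hBM' : B ≤ M := hBM (by rw [div_le_iff₀ hJpos]; linarith)
    have hDb : b ^ 2 ≤ D := by nlinarith [sq_nonneg (ξ - kk * t)]
    have hkey : |a| ^ 3 / D ≤ 2 * |a| * G := by
      rw [div_le_iff₀ hDpos, hG]
      have h1 : |a| ^ 3 = |a| * a ^ 2 := by rw [pow_succ, sq_abs]; ring
      have h2 : a ^ 2 ≤ 2 * (a - b) ^ 2 + 2 * b ^ 2 := by nlinarith [sq_nonneg (a - 2 * b)]
      have h3 : 2 * (a - b) ^ 2 + 2 * b ^ 2 ≤ 2 * (1 + (a - b) ^ 2) * D := by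
        nlinarith [sq_nonneg (a - b), mul_nonneg (sq_nonneg (a - b)) (sub_nonneg.2 hD1)]
      calc |a| ^ 3 = |a| * a ^ 2 := h1
        _ ≤ |a| * (2 * (1 + (a - b) ^ 2) * D) :=
            mul_le_mul_of_nonneg_left (le_trans h2 h3) ha0
        _ = 2 * |a| * (1 + (a - b) ^ 2) * D := by ring
    have hL : |a| ^ 3 / D * B ≤ 2 * M * (|a| * G) := by
      calc |a| ^ 3 / D * B ≤ 2 * |a| * G * M :=
            mul_le_mul hkey hBM' hB0 (by positivity)
        _ = 2 * M * (|a| * G) := by ring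
    have hRB : 2 * M * (|a| * G) ≤ (13 + 4 * M) * |a| * (G + |a| ^ 2 / T ^ 2 * B) := by
      have h4 : 2 * M * (|a| * G) ≤ (13 + 4 * M) * (|a| * G) :=
        mul_le_mul_of_nonneg_right (by linarith) (by positivity)
      have h5 : (0:ℝ) ≤ (13 + 4 * M) * |a| := by positivity
      nlinarith [mul_nonneg h5 hX0]
    exact le_trans hL hRB
  · -- Case 2 : J < t/2, denominator dominates T², second RHS term dominates
    have hxi2 : |ξ| < t / 2 := by have := abs_nonneg b; linarith
    have hres : t / 2 ≤ |ξ - kk * t| := by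
      have h1 : t ≤ |kk * t| := by
        rw [abs_mul, abs_of_nonneg (by linarith : (0:ℝ) ≤ t)]
        nlinarith
      have h2 : |kk * t| - |ξ| ≤ |ξ - kk * t| := by
        have := abs_sub_abs_le_abs_sub (kk * t) ξ
        rw [abs_sub_comm] at this
        linarith
      linarith
    have hres2 : (t / 2) ^ 2 ≤ (ξ - kk * t) ^ 2 := by
      nlinarith [sq_abs (ξ - kk * t), abs_nonneg (ξ - kk * t)]
    have hTD : T ^ 2 ≤ 13 * D := by
      have hbb : |b| < t / 2 := by have := abs_nonneg ξ; linarith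
      rw [hTsq]
      nlinarith [sq_nonneg b, abs_nonneg b, sq_abs b]
    have hdiv : |a| ^ 3 / D ≤ 13 * (|a| ^ 3 / T ^ 2) := by
      rw [div_le_iff₀ hDpos]
      have h9 : 13 * (|a| ^ 3 / T ^ 2) * D = |a| ^ 3 * (13 * D) / T ^ 2 := by ring
      rw [h9, le_div_iff₀ hTT]
      have h6 : (0:ℝ) ≤ |a| ^ 3 := by positivity
      nlinarith [mul_le_mul_of_nonneg_left hTD h6]
    have hL : |a| ^ 3 / D * B ≤ 13 * (|a| * (|a| ^ 2 / T ^ 2 * B)) := by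
      calc |a| ^ 3 / D * B ≤ 13 * (|a| ^ 3 / T ^ 2) * B :=
            mul_le_mul_of_nonneg_right hdiv hB0
        _ = 13 * (|a| * (|a| ^ 2 / T ^ 2 * B)) := by ring
    have hRB : 13 * (|a| * (|a| ^ 2 / T ^ 2 * B)) ≤
        (13 + 4 * M) * |a| * (G + |a| ^ 2 / T ^ 2 * B) := by
      have h8 : (0:ℝ) ≤ (13 + 4 * M) * |a| := by positivity
      nlinarith [mul_nonneg h8 hG0, mul_nonneg h8 hX0]
    exact le_trans hL hRB

/-- Inequality (ineq:AdeZZZ) of Lemma (lem:MainFreqRat), a triple `Z`-derivative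
estimate for the nonlinear forcing terms: for every real `p` there is `C = C(p) > 0`
such that for `t ≥ 1` and every nonzero integer `k`,
`[|l|³ / (k² + (l')² + (ξ - kt)²)] ⟨t/⟨ξ,l'⟩⟩^p ≤
  C |l| (⟨l - l'⟩² + (|l|² / ⟨l', t⟩²) ⟨t/⟨ξ,l'⟩⟩^p)`. -/
theorem AdeZZZ (p : ℝ) :
    ∃ C : ℝ, 0 < C ∧
      ∀ (t ξ : ℝ) (k l l' : ℤ), 1 ≤ t → k ≠ 0 →
        |(l : ℝ)| ^ 3 / ((k : ℝ) ^ 2 + (l' : ℝ) ^ 2 + (ξ - (k : ℝ) * t) ^ 2) *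
            jb (t / jb2 ξ (l' : ℝ)) ^ p ≤
          C * |(l : ℝ)| *
            (jb ((l : ℝ) - (l' : ℝ)) ^ 2 +
              |(l : ℝ)| ^ 2 / jb2 (l' : ℝ) t ^ 2 * jb (t / jb2 ξ (l' : ℝ)) ^ p) := by
  set M := max 1 (Real.sqrt 5 ^ p) with hMdef
  have hM1 : (1:ℝ) ≤ M := le_max_left _ _
  refine ⟨13 + 4 * M, by linarith, ?_⟩
  intro t ξ k l l' ht hk
  have hk1 : (1:ℝ) ≤ |(k:ℝ)| := by exact_mod_cast Int.one_le_abs hk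
  have habs : |(t:ℝ)| = t := abs_of_nonneg (by linarith)
  refine AdeZZZ_aux M (l:ℝ) (l':ℝ) ξ t (k:ℝ) (jb2 ξ (l':ℝ)) (jb2 (l':ℝ) t)
      (jb (t / jb2 ξ (l':ℝ)) ^ p) (jb ((l:ℝ) - (l':ℝ)) ^ 2)
      hM1 ht hk1 (one_le_jb2 _ _) (abs_add_le_jb2 _ _) (one_le_jb2 _ _) ?_
      (Real.rpow_nonneg (jb_pos _).le _) ?_ (jb_sq _)
  · rw [jb2_sq, habs]
  · intro h
    exact rpow_bound p (one_le_jb _) (jb_le_sqrt5 (div_nonneg (by linarith) (jb2_pos _ _).le) h)
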